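/- Assume (G), (L) and (M), and suppose there exists r1 > 0 with M(r1,L) > R0. Then there exists R2 > 0 such that for every R > R2 one has a − |log C1|/log R > 1 and, for every integer n ≥ 1, log M( 2^n · M^n(R,L), L ) ≥ ( a − |log C1|/log R )^n · log M^{n+1}(R,L). -/
import Mathlib


/-- The maximum modulus `M(r,g) = max_{‖x‖ = r} ‖g(x)‖` (as a supremum). -/
noncomputable def maxMod {m : ℕ} (g : EuclideanSpace ℝ (Fin m) → EuclideanSpace ℝ (Fin m))
    (r : ℝ) : ℝ :=
  sSup ((fun x => ‖g x‖) '' {x : EuclideanSpace ℝ (Fin m) | ‖x‖ = r})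

/-- The iterated maximum modulus: `M^0(R,g) = R`, `M^{n+1}(R,g) = M(M^n(R,g), g)`. -/
noncomputable def iterMaxMod {m : ℕ} (g : EuclideanSpace ℝ (Fin m) → EuclideanSpace ℝ (Fin m))
    (R : ℝ) : ℕ → ℝ
  | 0 => R
  | n + 1 => maxMod g (iterMaxMod g R n)

set_option maxHeartbeats 1000000

lemma maxMod_spec {m : ℕ} (hm : 2 ≤ m)
    (L : EuclideanSpace ℝ (Fin m) → EuclideanSpace ℝ (Fin m)) (hLcont : Continuous L)
    {r : ℝ} (hr : 0 ≤ r) :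
    ∃ x : EuclideanSpace ℝ (Fin m), ‖x‖ = r ∧ maxMod L r = ‖L x‖ ∧
      ∀ y : EuclideanSpace ℝ (Fin m), ‖y‖ = r → ‖L y‖ ≤ maxMod L r := by
  have hS : {x : EuclideanSpace ℝ (Fin m) | ‖x‖ = r} = Metric.sphere (0 : EuclideanSpace ℝ (Fin m)) r := by
    ext x; simp [mem_sphere_zero_iff_norm]
  have hcomp : IsCompact {x : EuclideanSpace ℝ (Fin m) | ‖x‖ = r} := by
    rw [hS]; exact isCompact_sphere _ _
  have hne : ({x : EuclideanSpace ℝ (Fin m) | ‖x‖ = r}).Nonempty := by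
    refine ⟨EuclideanSpace.single (⟨0, by omega⟩ : Fin m) r, ?_⟩
    simp [EuclideanSpace.norm_single, abs_of_nonneg hr]
  have hcont : ContinuousOn (fun x : EuclideanSpace ℝ (Fin m) => ‖L x‖)
      {x : EuclideanSpace ℝ (Fin m) | ‖x‖ = r} := (continuous_norm.comp hLcont).continuousOn
  obtain ⟨x, hx, hsup, hge⟩ := hcomp.exists_sSup_image_eq_and_ge hne hcont
  refine ⟨x, hx, hsup, fun y hy => ?_⟩
  have := hge y hy
  unfold maxMod
  rw [hsup]
  exact this

/-- The key estimate in the proof of Lemma 7.2 of the paper: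
`log M(2^n M^n(R,L), L) ≥ (a − |log C1|/log R)^n · log M^{n+1}(R,L)` for all large `R`. -/
theorem log_maxMod_key_estimate {m : ℕ} (hm : 2 ≤ m) (d K : ℝ) (hK : 1 ≤ K) (hdK : K < d)
    (a b : ℝ) (ha : a = (d / K) ^ ((1 : ℝ) / ((m : ℝ) - 1)))
    (hb : b = (d * K) ^ ((1 : ℝ) / ((m : ℝ) - 1)))
    (R0 C1 C2 : ℝ) (hR0 : 1 ≤ R0) (hC1 : 0 < C1) (hC2 : 1 ≤ C2)
    (hbig : 1 < C1 * R0 ^ (a - 1))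
    (f L : EuclideanSpace ℝ (Fin m) → EuclideanSpace ℝ (Fin m))
    (hlow : ∀ y : EuclideanSpace ℝ (Fin m), R0 < ‖y‖ → C1 * ‖y‖ ^ a ≤ ‖f y‖)
    (hup : ∀ y : EuclideanSpace ℝ (Fin m), ‖f y‖ ≤ C2 * (max ‖y‖ R0) ^ b)
    (hLcont : Continuous L)
    (hfunc : ∀ x : EuclideanSpace ℝ (Fin m), f (L x) = L ((2 : ℝ) • x))
    (hmono : ∀ r s : ℝ, 0 < r → r ≤ s → maxMod L r ≤ maxMod L s)
    (r1 : ℝ) (hr1 : 0 < r1) (hMr1 : R0 < maxMod L r1) :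
    ∃ R2 : ℝ, 0 < R2 ∧ ∀ R : ℝ, R2 < R →
      1 < a - |Real.log C1| / Real.log R ∧
      ∀ n : ℕ, 1 ≤ n →
        (a - |Real.log C1| / Real.log R) ^ n * Real.log (iterMaxMod L R (n + 1)) ≤
          Real.log (maxMod L ((2 : ℝ) ^ n * iterMaxMod L R n)) := by
  have hKpos : (0:ℝ) < K := by linarith
  have hm1 : (1:ℝ) ≤ (m:ℝ) - 1 := by
    have : (2:ℝ) ≤ (m:ℝ) := by exact_mod_cast hm
    linarith
  have ha1 : 1 < a := by
    rw [ha, Real.one_lt_rpow_iff_of_pos (div_pos (by linarith) hKpos)]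
    left
    exact ⟨(one_lt_div hKpos).mpr hdK, by positivity⟩
  have ham1 : (0:ℝ) < a - 1 := by linarith
  set c := Real.log C1 with hc
  have hR0pos : (0:ℝ) < R0 := by linarith
  have hδR0 : 0 < Real.log R0 + c / (a - 1) := by
    have h := Real.log_lt_log (by norm_num) hbig
    rw [Real.log_mul (ne_of_gt hC1) (Real.rpow_pos_of_pos hR0pos _).ne', Real.log_rpow hR0pos] at h
    simp only [Real.log_one] at h
    rw [show Real.log R0 + c / (a - 1) = (c + (a - 1) * Real.log R0) / (a - 1) by
      field_simp; ring]
    exact div_pos (by linarith) ham1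
  -- the key step: doubling the radius
  have hkey : ∀ r : ℝ, 0 < r → R0 < maxMod L r →
      C1 * (maxMod L r) ^ a ≤ maxMod L (2 * r) := by
    intro r hrpos hMr
    obtain ⟨x, hxn, hMx, _⟩ := maxMod_spec hm L hLcont hrpos.le
    obtain ⟨_, _, _, hub⟩ := maxMod_spec hm L hLcont (r := 2 * r) (by linarith)
    have hnx : R0 < ‖L x‖ := by rw [← hMx]; exact hMr
    have h1 := hlow _ hnx
    rw [hfunc] at h1
    have h2 : ‖(2:ℝ) • x‖ = 2 * r := by
      rw [norm_smul, hxn]; simp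
    calc C1 * (maxMod L r) ^ a = C1 * ‖L x‖ ^ a := by rw [hMx]
      _ ≤ ‖L ((2:ℝ) • x)‖ := h1
      _ ≤ maxMod L (2 * r) := hub _ h2
  -- growth of C1 t^a
  have hgrow : ∀ t : ℝ, R0 < t → t < C1 * t ^ a := by
    intro t ht
    have htpos : (0:ℝ) < t := by linarith
    have h1 : R0 ^ (a - 1) ≤ t ^ (a - 1) :=
      Real.rpow_le_rpow hR0pos.le ht.le (by linarith)
    have h2 : t ^ (a - 1) * t = t ^ a := by
      rw [← Real.rpow_add_one htpos.ne']
      norm_num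
    have h3 : 1 < C1 * t ^ (a - 1) :=
      lt_of_lt_of_le hbig (mul_le_mul_of_nonneg_left h1 hC1.le)
    have h4 := mul_lt_mul_of_pos_right h3 htpos
    rw [one_mul, mul_assoc, h2] at h4
    exact h4
  -- the dyadic sequence
  set v : ℕ → ℝ := fun k => maxMod L ((2:ℝ) ^ k * r1) with hv
  have hv0 : R0 < v 0 := by simpa [hv] using hMr1
  have hvR0 : ∀ k, R0 < v k := by
    intro k
    induction k with
    | zero => exact hv0
    | succ k ih =>
      have hrk : (0:ℝ) < (2:ℝ) ^ k * r1 := mul_pos (pow_pos two_pos k) hr1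
      have h1 := hkey _ hrk ih
      have h2 : (2:ℝ) * ((2:ℝ) ^ k * r1) = (2:ℝ) ^ (k + 1) * r1 := by ring
      rw [h2] at h1
      have := hgrow (v k) ih
      simp only [hv] at this h1 ⊢
      linarith
  have hvpos : ∀ k, 0 < v k := fun k => lt_of_lt_of_le hR0pos (hvR0 k).le
  set u : ℕ → ℝ := fun k => Real.log (v k) with hu
  have hurec : ∀ k, a * u k + c ≤ u (k + 1) := by
    intro k
    have hrk : (0:ℝ) < (2:ℝ) ^ k * r1 := mul_pos (pow_pos two_pos k) hr1
    have h1 := hkey _ hrk (hvR0 k)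
    have h2 : (2:ℝ) * ((2:ℝ) ^ k * r1) = (2:ℝ) ^ (k + 1) * r1 := by ring
    rw [h2] at h1
    have h3 : Real.log (C1 * (v k) ^ a) ≤ u (k + 1) :=
      Real.log_le_log (mul_pos hC1 (Real.rpow_pos_of_pos (hvpos k) a)) h1
    rw [Real.log_mul (ne_of_gt hC1) (Real.rpow_pos_of_pos (hvpos k) a).ne',
      Real.log_rpow (hvpos k)] at h3
    simp only [hu, hc] at h3 ⊢
    linarith
  set δ0 : ℝ := u 0 + c / (a - 1) with hδ0def
  have hδ0 : 0 < δ0 := by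
    have : Real.log R0 < u 0 := Real.log_lt_log hR0pos hv0
    simp only [hδ0def]
    linarith
  have hexp : ∀ k, a ^ k * δ0 ≤ u k + c / (a - 1) := by
    intro k
    induction k with
    | zero => simp [hδ0def]
    | succ k ih =>
      have h1 : a * (u k + c / (a - 1)) = a * u k + c + c / (a - 1) := by
        field_simp; ring
      have h2 : a * (a ^ k * δ0) ≤ a * (u k + c / (a - 1)) :=
        mul_le_mul_of_nonneg_left ih (by linarith)
      have h3 := hurec k
      calc a ^ (k + 1) * δ0 = a * (a ^ k * δ0) := by ring
        _ ≤ a * (u k + c / (a - 1)) := h2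
        _ = a * u k + c + c / (a - 1) := h1
        _ ≤ u (k + 1) + c / (a - 1) := by linarith
  -- choose k0
  have hlog2 : (0:ℝ) < Real.log 2 := Real.log_pos (by norm_num)
  have hk0 : ∃ k0 : ℕ, ∀ k ≥ k0,
      ((k:ℝ) + 1) * Real.log 2 + Real.log r1 + c / (a - 1) ≤ a ^ k * δ0 := by
    have hainv : ‖a⁻¹‖ < 1 := by
      rw [Real.norm_eq_abs, abs_of_pos (inv_pos.mpr (by linarith : (0:ℝ) < a))]
      rw [inv_lt_one_iff₀]; right; exact ha1
    have hsum : Summable (fun n : ℕ => (n:ℝ) ^ 1 * (a⁻¹) ^ n) :=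
      summable_pow_mul_geometric_of_norm_lt_one 1 hainv
    have htend := hsum.tendsto_atTop_zero
    have hε : (0:ℝ) < δ0 / (2 * Real.log 2) := div_pos hδ0 (by linarith)
    have h1 : ∀ᶠ n : ℕ in Filter.atTop, (n:ℝ) ^ 1 * (a⁻¹) ^ n < δ0 / (2 * Real.log 2) :=
      htend.eventually (gt_mem_nhds hε)
    have h2 : ∀ᶠ n : ℕ in Filter.atTop,
        Real.log 2 + Real.log r1 + c / (a - 1) ≤ δ0 / 2 * a ^ n := by
      have ht : Filter.Tendsto (fun n : ℕ => δ0 / 2 * a ^ n) Filter.atTop Filter.atTop :=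
        (tendsto_pow_atTop_atTop_of_one_lt ha1).const_mul_atTop (half_pos hδ0)
      exact ht.eventually_ge_atTop _
    obtain ⟨k0, hk0⟩ := (h1.and h2).exists_forall_of_atTop
    refine ⟨k0, fun k hk => ?_⟩
    obtain ⟨hA, hB⟩ := hk0 k hk
    have hapow : (0:ℝ) < a ^ k := pow_pos (by linarith) k
    have hA' : (k:ℝ) * Real.log 2 ≤ δ0 / 2 * a ^ k := by
      have h0 : (k:ℝ) * (a⁻¹) ^ k * a ^ k ≤ δ0 / (2 * Real.log 2) * a ^ k := by
        have := mul_le_mul_of_nonneg_right hA.le hapow.le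
        simpa [pow_one] using this
      rw [mul_assoc, inv_pow, inv_mul_cancel₀ (ne_of_gt hapow), mul_one] at h0
      have h1 := mul_le_mul_of_nonneg_right h0 hlog2.le
      calc (k:ℝ) * Real.log 2 ≤ δ0 / (2 * Real.log 2) * a ^ k * Real.log 2 := h1
        _ = δ0 / 2 * a ^ k := by field_simp
    linarith
  obtain ⟨k0, hWlog⟩ := hk0
  -- W : the sequence overtakes the radius
  have hW : ∀ k ≥ k0, (2:ℝ) ^ (k + 1) * r1 ≤ v k := by
    intro k hk
    have h1 : Real.log ((2:ℝ) ^ (k + 1) * r1) ≤ u k := by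
      rw [Real.log_mul (by positivity) (ne_of_gt hr1), Real.log_pow]
      have := hWlog k hk
      have := hexp k
      push_cast
      linarith
    have h2 : (0:ℝ) < (2:ℝ) ^ (k + 1) * r1 := mul_pos (pow_pos two_pos _) hr1
    exact (Real.log_le_log_iff h2 (hvpos k)).mp h1
  -- Fact A : maxMod beats identity for large radius
  have hFactA : ∀ r : ℝ, (2:ℝ) ^ (k0 + 1) * r1 ≤ r → r < maxMod L r := by
    intro r hr
    have hrpos : (0:ℝ) < r := lt_of_lt_of_le (mul_pos (pow_pos two_pos _) hr1) hr
    have hex : ∃ j : ℕ, r < (2:ℝ) ^ (j + 1) * r1 := by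
      obtain ⟨j, hj⟩ := pow_unbounded_of_one_lt (r / r1) (by norm_num : (1:ℝ) < 2)
      refine ⟨j, ?_⟩
      have : r / r1 < (2:ℝ) ^ (j + 1) := lt_of_lt_of_le hj (by
        apply pow_le_pow_right₀ (by norm_num) (by omega))
      calc r = r / r1 * r1 := by field_simp
        _ < (2:ℝ) ^ (j + 1) * r1 := by nlinarith
    set k := Nat.find hex with hkdef
    have hkspec : r < (2:ℝ) ^ (k + 1) * r1 := Nat.find_spec hex
    have hk0k : k0 < k := by
      by_contra hcon
      push_neg at hcon
      have : (2:ℝ) ^ (k + 1) ≤ (2:ℝ) ^ (k0 + 1) :=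
        pow_le_pow_right₀ (by norm_num) (by omega)
      nlinarith
    have hk1 : 1 ≤ k := by omega
    have hmin : ¬ (r < (2:ℝ) ^ ((k - 1) + 1) * r1) := Nat.find_min hex (by omega)
    rw [show (k - 1) + 1 = k by omega] at hmin
    push_neg at hmin
    have h1 : maxMod L ((2:ℝ) ^ k * r1) ≤ maxMod L r := hmono _ _ (mul_pos (pow_pos two_pos _) hr1) hmin
    have h2 : (2:ℝ) ^ (k + 1) * r1 ≤ v k := hW k (by omega)
    have : r < v k := lt_of_lt_of_le hkspec h2
    simp only [hv] at this h1
    linarith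
  -- choose R2
  refine ⟨max ((2:ℝ) ^ (k0 + 1) * r1) (max (R0 + 1) (Real.exp (|c| / (a - 1)) + 1)),
    lt_of_lt_of_le (mul_pos (pow_pos two_pos _) hr1) (le_max_left _ _), ?_⟩
  intro R hR
  have hRlow : (2:ℝ) ^ (k0 + 1) * r1 < R := lt_of_le_of_lt (le_max_left _ _) hR
  have hRR0 : R0 + 1 < R := lt_of_le_of_lt ((le_max_left _ _).trans (le_max_right _ _)) hR
  have hRexp : Real.exp (|c| / (a - 1)) < R := by
    have h1 : Real.exp (|c| / (a - 1)) + 1 ≤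
        max ((2:ℝ) ^ (k0 + 1) * r1) (max (R0 + 1) (Real.exp (|c| / (a - 1)) + 1)) :=
      le_trans (le_max_right (R0 + 1) _) (le_max_right _ _)
    linarith [h1.trans_lt hR]
  have hR1 : (1:ℝ) < R := by linarith
  have hRpos : (0:ℝ) < R := by linarith
  have hlogR : (0:ℝ) < Real.log R := Real.log_pos hR1
  have hlogRc : |c| / (a - 1) < Real.log R := (Real.lt_log_iff_exp_lt hRpos).mpr hRexp
  set A : ℝ := a - |c| / Real.log R with hAdef
  have hA : 1 < A := by
    have : |c| / Real.log R < a - 1 := by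
      rw [div_lt_iff₀ hlogR]
      rw [div_lt_iff₀ ham1] at hlogRc
      linarith [mul_lt_mul_of_pos_left hlogRc (by linarith : (0:ℝ) < 1)]
    simp only [hAdef]
    linarith
  refine ⟨hA, ?_⟩
  -- Fact B : iterates stay above R
  have hFactB : ∀ j : ℕ, R ≤ iterMaxMod L R j := by
    intro j
    induction j with
    | zero => simp [iterMaxMod]
    | succ j ih =>
      have h1 : iterMaxMod L R j < maxMod L (iterMaxMod L R j) :=
        hFactA _ (by linarith)
      show R ≤ maxMod L (iterMaxMod L R j)
      linarith
  -- main induction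
  have hmain : ∀ n k : ℕ,
      A ^ k * Real.log (iterMaxMod L R (n + 1)) ≤
        Real.log (maxMod L ((2:ℝ) ^ k * iterMaxMod L R n)) := by
    intro n k
    induction k with
    | zero =>
      simp only [pow_zero, one_mul]
      simp [iterMaxMod]
    | succ k ih =>
      have hMn : R ≤ iterMaxMod L R n := hFactB n
      have hMnpos : (0:ℝ) < iterMaxMod L R n := by linarith
      have h2k : iterMaxMod L R n ≤ (2:ℝ) ^ k * iterMaxMod L R n := by
        have h := mul_le_mul_of_nonneg_right
          (one_le_pow₀ (by norm_num : (1:ℝ) ≤ 2) (n := k)) hMnpos.le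
        simpa using h
      set t : ℝ := maxMod L ((2:ℝ) ^ k * iterMaxMod L R n) with htdef
      have ht1 : iterMaxMod L R (n + 1) ≤ t := by
        have := hmono (iterMaxMod L R n) ((2:ℝ) ^ k * iterMaxMod L R n) hMnpos h2k
        exact this
      have htR : R ≤ t := le_trans (hFactB (n + 1)) ht1
      have htR0 : R0 < t := by linarith
      have htpos : (0:ℝ) < t := by linarith
      have hkeyapp := hkey _ (mul_pos (pow_pos two_pos k) hMnpos) htR0
      rw [show (2:ℝ) * ((2:ℝ) ^ k * iterMaxMod L R n) = (2:ℝ) ^ (k + 1) * iterMaxMod L R n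
        by ring] at hkeyapp
      have hlog1 : Real.log (C1 * t ^ a) ≤
          Real.log (maxMod L ((2:ℝ) ^ (k + 1) * iterMaxMod L R n)) :=
        Real.log_le_log (mul_pos hC1 (Real.rpow_pos_of_pos htpos a)) hkeyapp
      rw [Real.log_mul (ne_of_gt hC1) (Real.rpow_pos_of_pos htpos a).ne',
        Real.log_rpow htpos] at hlog1
      have hlogt : Real.log R ≤ Real.log t := Real.log_le_log hRpos htR
      have h5 : |c| ≤ |c| / Real.log R * Real.log t := by
        rw [div_mul_eq_mul_div, le_div_iff₀ hlogR]
        exact mul_le_mul_of_nonneg_left hlogt (abs_nonneg c)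
      have h6 : A * Real.log t ≤ c + a * Real.log t := by
        have hnc : -|c| ≤ c := neg_abs_le c
        simp only [hAdef]
        linarith [h5]
      have h7 : A ^ (k + 1) * Real.log (iterMaxMod L R (n + 1)) ≤ A * Real.log t := by
        calc A ^ (k + 1) * Real.log (iterMaxMod L R (n + 1))
            = A * (A ^ k * Real.log (iterMaxMod L R (n + 1))) := by ring
          _ ≤ A * Real.log t := mul_le_mul_of_nonneg_left ih (by linarith)
      linarith
  intro n _
  exact hmain n n
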